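/- arXiv:2107.03433 — 2 statements merged into one kernel-verified Lean document; each statement's English description precedes it below -/
import Mathlib

section
/- Let X1, X2, X3, Y, U1, U2, U3, U4 be discrete random variables whose joint law factorizes as P_{X1,X2,X3,Y} · P_{U1|X1} · P_{U2|X2} · P_{U3|X3} · P_{U4|U2,U3}. Then for every s ≥ 0, -H(Y|U1,U2,U3) - s[ I(X1,X2,X3;U1,U2,U3) + I(X2,X3;U2,U3|U1) ] ≥ -H(Y|U1,U4) - s·I(X1;U1) - 2s[ I(X2;U2) + I(X3;U3) ] + 2s[ I(U2;U1) + I(U3;U1,U2) ]. -/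
/-!
Each `Uᵢ` is drawn through a kernel `kᵢ` from its parents, and is conditionally independent of
everything else given them. Hence, by the chain rule, appending `Uᵢ` to any tuple that contains
its parents raises the entropy by exactly `-E log kᵢ`. Expanding every mutual information this way,
both brackets multiplied by `s` become `2 H(U1,U2,U3) - H(U1) + E log k1 + 2 E log k2 + 2 E log k3`.
What remains is `H(Y|U1,U2,U3) ≤ H(Y|U1,U4)`. Since `U4` is drawn from `(U2,U3)` alone,
`H(Y|U1,U2,U3) = H(Y|U1,U4,U2,U3)`, and conditioning on more cannot increase entropy (Gibbs'
inequality, from `log x ≤ x - 1`).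
-/

open Real
open scoped BigOperators Classical

noncomputable section

/-- Shannon entropy of a pmf on a finite alphabet. -/
def ent {α : Type*} [Fintype α] (p : α → ℝ) : ℝ := -∑ x, p x * Real.log (p x)

/-- Kullback–Leibler divergence between pmfs on a finite alphabet. -/
def kl {α : Type*} [Fintype α] (p q : α → ℝ) : ℝ := ∑ x, p x * Real.log (p x / q x)

/-- Marginal pmf of the random variable `f` under joint pmf `p`. -/
def margOf {Ω α : Type*} [Fintype Ω] (p : Ω → ℝ) (f : Ω → α) (a : α) : ℝ :=
  ∑ ω, if f ω = a then p ω else 0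

/-- Entropy of the random variable `f` under joint pmf `p`. -/
def entOf {Ω α : Type*} [Fintype Ω] [Fintype α] (p : Ω → ℝ) (f : Ω → α) : ℝ :=
  ent (margOf p f)

/-- Conditional entropy `H(f | g)` under joint pmf `p`. -/
def condEntOf {Ω α β : Type*} [Fintype Ω] [Fintype α] [Fintype β]
    (p : Ω → ℝ) (f : Ω → α) (g : Ω → β) : ℝ :=
  entOf p (fun ω => (g ω, f ω)) - entOf p g

/-- Mutual information `I(f ; g)` under joint pmf `p`. -/
def miOf {Ω α β : Type*} [Fintype Ω] [Fintype α] [Fintype β]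
    (p : Ω → ℝ) (f : Ω → α) (g : Ω → β) : ℝ :=
  entOf p f + entOf p g - entOf p (fun ω => (f ω, g ω))

/-- Conditional mutual information `I(f ; g | h)` under joint pmf `p`. -/
def cmiOf {Ω α β γ : Type*} [Fintype Ω] [Fintype α] [Fintype β] [Fintype γ]
    (p : Ω → ℝ) (f : Ω → α) (g : Ω → β) (h : Ω → γ) : ℝ :=
  entOf p (fun ω => (h ω, f ω)) + entOf p (fun ω => (h ω, g ω))
    - entOf p (fun ω => (h ω, f ω, g ω)) - entOf p h

section Marginals

variable {Ω α β γ : Type*} [Fintype Ω] {p : Ω → ℝ}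

theorem sum_margOf_mul [Fintype α] (p : Ω → ℝ) (f : Ω → α) (G : α → ℝ) :
    ∑ a, margOf p f a * G a = ∑ ω, p ω * G (f ω) := by
  simp only [margOf, Finset.sum_mul, ite_mul, zero_mul]
  rw [Finset.sum_comm]
  exact Finset.sum_congr rfl fun ω _ => by simp

theorem sum_margOf [Fintype α] (p : Ω → ℝ) (f : Ω → α) : ∑ a, margOf p f a = ∑ ω, p ω := by
  simpa using sum_margOf_mul p f fun _ => 1

theorem sum_margOf_pair [Fintype β] (p : Ω → ℝ) (f : Ω → α) (g : Ω → β) (a : α) :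
    ∑ b, margOf p (fun ω => (f ω, g ω)) (a, b) = margOf p f a := by
  simp only [margOf, Prod.mk.injEq]
  rw [Finset.sum_comm]
  exact Finset.sum_congr rfl fun ω _ => by by_cases h : f ω = a <;> simp [h]

theorem margOf_comp [Fintype α] (p : Ω → ℝ) (f : Ω → α) (h : α → γ) (c : γ) :
    margOf p (fun ω => h (f ω)) c = ∑ a, if h a = c then margOf p f a else 0 := by
  simpa [margOf, mul_ite] using (sum_margOf_mul p f fun a => if h a = c then 1 else 0).symm

theorem margOf_nonneg (hp0 : ∀ ω, 0 ≤ p ω) (f : Ω → α) (a : α) : 0 ≤ margOf p f a :=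
  Finset.sum_nonneg fun ω _ => by split_ifs <;> simp [hp0 ω]

theorem le_margOf (hp0 : ∀ ω, 0 ≤ p ω) (f : Ω → α) (ω : Ω) : p ω ≤ margOf p f (f ω) := by
  simpa [margOf] using Finset.single_le_sum (f := fun ω' => if f ω' = f ω then p ω' else 0)
    (fun ω' _ => by split_ifs <;> simp [hp0 ω']) (Finset.mem_univ ω)

theorem margOf_pos (hp0 : ∀ ω, 0 ≤ p ω) (f : Ω → α) {ω : Ω} (hω : p ω ≠ 0) :
    0 < margOf p f (f ω) :=
  (lt_of_le_of_ne (hp0 ω) hω.symm).trans_le (le_margOf hp0 f ω)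

theorem entOf_eq [Fintype α] (p : Ω → ℝ) (f : Ω → α) :
    entOf p f = -∑ ω, p ω * Real.log (margOf p f (f ω)) := by
  rw [entOf, ent, sum_margOf_mul]

theorem entOf_congr_of_iff [Fintype α] [Fintype β] {f : Ω → α} {g : Ω → β}
    (h : ∀ ω ω', f ω' = f ω ↔ g ω' = g ω) :
    entOf p f = entOf p g := by
  simp only [entOf_eq, margOf, h]

end Marginals

section Gibbs

variable {Ω α β γ : Type*} [Fintype Ω] [Fintype α] [Fintype β] [Fintype γ] {p : Ω → ℝ}

theorem sum_mul_log_nonpos (hp0 : ∀ ω, 0 ≤ p ω) {R : Ω → ℝ} (hR : ∀ ω, p ω ≠ 0 → 0 < R ω)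
    (hsum : ∑ ω, p ω * R ω ≤ ∑ ω, p ω) : ∑ ω, p ω * Real.log (R ω) ≤ 0 := by
  have hpt : ∀ ω, p ω * Real.log (R ω) ≤ p ω * R ω - p ω := fun ω => by
    rcases eq_or_ne (p ω) 0 with h | h
    · simp [h]
    · nlinarith [Real.log_le_sub_one_of_pos (hR ω h), hp0 ω]
  calc ∑ ω, p ω * Real.log (R ω) ≤ ∑ ω, (p ω * R ω - p ω) := Finset.sum_le_sum fun ω _ => hpt ω
    _ ≤ 0 := by rw [Finset.sum_sub_distrib]; linarith

theorem sum_mul_margOf_ratio_le (hp0 : ∀ ω, 0 ≤ p ω) (f : Ω → α) (g : Ω → β) (h : Ω → γ) :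
    ∑ ω, p ω * (margOf p (fun ω => (h ω, f ω)) (h ω, f ω)
        * margOf p (fun ω => (h ω, g ω)) (h ω, g ω)
        / (margOf p (fun ω => ((h ω, g ω), f ω)) ((h ω, g ω), f ω) * margOf p h (h ω)))
      ≤ ∑ ω, p ω := by
  set m₁ := margOf p (fun ω => (h ω, f ω))
  set m₂ := margOf p (fun ω => (h ω, g ω))
  set m₃ := margOf p (fun ω => ((h ω, g ω), f ω))
  set m₀ := margOf p h
  have hm₁ : ∀ v, 0 ≤ m₁ v := margOf_nonneg hp0 _
  have hm₂ : ∀ v, 0 ≤ m₂ v := margOf_nonneg hp0 _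
  have hm₀ : ∀ v, 0 ≤ m₀ v := margOf_nonneg hp0 _
  calc _ = ∑ v : (γ × β) × α, m₃ v * (m₁ (v.1.1, v.2) * m₂ v.1 / (m₃ v * m₀ v.1.1)) :=
        (sum_margOf_mul p _ fun v => m₁ (v.1.1, v.2) * m₂ v.1 / (m₃ v * m₀ v.1.1)).symm
    _ ≤ ∑ v : (γ × β) × α, m₁ (v.1.1, v.2) * m₂ v.1 / m₀ v.1.1 := by
        refine Finset.sum_le_sum fun v _ => ?_
        rcases eq_or_ne (m₃ v) 0 with h₃ | h₃
        · rw [h₃, zero_mul]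
          exact div_nonneg (mul_nonneg (hm₁ _) (hm₂ _)) (hm₀ _)
        · rw [← mul_div_assoc, mul_div_mul_left _ _ h₃]
    _ = ∑ w : γ × β, m₀ w.1 * m₂ w / m₀ w.1 := by
        rw [Fintype.sum_prod_type]
        refine Finset.sum_congr rfl fun w _ => ?_
        dsimp only
        rw [← Finset.sum_div, ← Finset.sum_mul]
        exact congrArg (· * m₂ w / m₀ w.1) (sum_margOf_pair p h f w.1)
    _ ≤ ∑ w : γ × β, m₂ w := by
        refine Finset.sum_le_sum fun w _ => ?_
        rcases eq_or_ne (m₀ w.1) 0 with h₀ | h₀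
        · simp [h₀, hm₂]
        · rw [mul_div_cancel_left₀ _ h₀]
    _ = ∑ ω, p ω := sum_margOf p _

theorem condEntOf_pair_le (hp0 : ∀ ω, 0 ≤ p ω) (f : Ω → α) (g : Ω → β) (h : Ω → γ) :
    condEntOf p f (fun ω => (h ω, g ω)) ≤ condEntOf p f h := by
  have hratio := sum_mul_margOf_ratio_le hp0 f g h
  set m₁ := margOf p (fun ω => (h ω, f ω))
  set m₂ := margOf p (fun ω => (h ω, g ω))
  set m₃ := margOf p (fun ω => ((h ω, g ω), f ω))
  set m₀ := margOf p h
  have hpos : ∀ ω, p ω ≠ 0 →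
      0 < m₁ (h ω, f ω) ∧ 0 < m₂ (h ω, g ω) ∧ 0 < m₃ ((h ω, g ω), f ω) ∧ 0 < m₀ (h ω) :=
    fun ω hω => ⟨margOf_pos hp0 _ hω, margOf_pos hp0 _ hω, margOf_pos hp0 _ hω, margOf_pos hp0 _ hω⟩
  have hgibbs := sum_mul_log_nonpos hp0
    (R := fun ω => m₁ (h ω, f ω) * m₂ (h ω, g ω) / (m₃ ((h ω, g ω), f ω) * m₀ (h ω)))
    (fun ω hω => by obtain ⟨h₁, h₂, h₃, h₀⟩ := hpos ω hω; positivity) hratio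
  have hlog : ∀ ω,
      p ω * Real.log (m₁ (h ω, f ω) * m₂ (h ω, g ω) / (m₃ ((h ω, g ω), f ω) * m₀ (h ω)))
        = p ω * Real.log (m₁ (h ω, f ω)) + p ω * Real.log (m₂ (h ω, g ω))
          - p ω * Real.log (m₃ ((h ω, g ω), f ω)) - p ω * Real.log (m₀ (h ω)) := fun ω => by
    rcases eq_or_ne (p ω) 0 with hω | hω
    · simp [hω]
    · obtain ⟨h₁, h₂, h₃, h₀⟩ := hpos ω hω
      rw [Real.log_div (by positivity) (by positivity), Real.log_mul h₁.ne' h₂.ne',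
        Real.log_mul h₃.ne' h₀.ne']
      ring
  simp only [hlog, Finset.sum_sub_distrib, Finset.sum_add_distrib] at hgibbs
  simp only [condEntOf, entOf_eq]
  linarith

end Gibbs

section Kernels

variable {Ω α β γ : Type*} [Fintype Ω] {p : Ω → ℝ}

def HasKernel (p : Ω → ℝ) (f : Ω → α) (g : Ω → β) (q : α → β → ℝ) : Prop :=
  ∀ a b, margOf p (fun ω => (f ω, g ω)) (a, b) = margOf p f a * q a b

theorem HasKernel.comp [Fintype α] [Fintype β] {f : Ω → α} {g : Ω → β} {q : γ → β → ℝ}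
    (h : α → γ) (hk : HasKernel p f g fun a => q (h a)) : HasKernel p (fun ω => h (f ω)) g q := by
  intro c b
  have hpush := margOf_comp p (fun ω => (f ω, g ω)) (fun x => (h x.1, x.2)) (c, b)
  simp only [Fintype.sum_prod_type, Prod.mk.injEq, ite_and, Finset.sum_ite_irrel,
    Finset.sum_ite_eq', Finset.mem_univ, if_true, Finset.sum_const_zero] at hpush
  rw [hpush, margOf_comp p f h c, Finset.sum_mul]
  refine Finset.sum_congr rfl fun a _ => ?_
  split_ifs with ha
  · rw [hk, ← ha]
  · rw [zero_mul]

theorem entOf_pair_of_hasKernel [Fintype α] [Fintype β] (hp0 : ∀ ω, 0 ≤ p ω) {f : Ω → α}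
    {g : Ω → β} {q : α → β → ℝ} (hk : HasKernel p f g q) :
    entOf p (fun ω => (f ω, g ω)) = entOf p f - ∑ ω, p ω * Real.log (q (f ω) (g ω)) := by
  have hlog : ∀ ω, p ω * Real.log (margOf p (fun ω => (f ω, g ω)) (f ω, g ω))
      = p ω * Real.log (margOf p f (f ω)) + p ω * Real.log (q (f ω) (g ω)) := fun ω => by
    rcases eq_or_ne (p ω) 0 with hω | hω
    · simp [hω]
    · have hpos := margOf_pos hp0 (fun ω => (f ω, g ω)) hω
      rw [hk] at hpos ⊢
      rw [Real.log_mul (left_ne_zero_of_mul hpos.ne') (right_ne_zero_of_mul hpos.ne'), mul_add]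
  simp only [entOf_eq, hlog, Finset.sum_add_distrib]
  ring

theorem condEntOf_le_of_hasKernel {Y U V W : Type*} [Fintype Y] [Fintype U] [Fintype V]
    [Fintype W] (hp0 : ∀ ω, 0 ≤ p ω) {y : Ω → Y} {u : Ω → U} {v : Ω → V} {w : Ω → W}
    {k : V → W → ℝ} (hk : HasKernel p (fun ω => ((u ω, v ω), y ω)) w fun a => k a.1.2) :
    condEntOf p y (fun ω => (u ω, v ω)) ≤ condEntOf p y (fun ω => (u ω, w ω)) := by
  have hmono := condEntOf_pair_le hp0 y v (fun ω => (u ω, w ω))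
  have hjoint := entOf_pair_of_hasKernel hp0 hk
  have hcond := entOf_pair_of_hasKernel hp0
    (hk.comp (fun a : (U × V) × Y => a.1) (q := fun a => k a.2))
  have e₁ : entOf p (fun ω => (((u ω, w ω), v ω), y ω))
      = entOf p (fun ω => (((u ω, v ω), y ω), w ω)) :=
    entOf_congr_of_iff fun _ _ => by simp only [Prod.mk.injEq]; tauto
  have e₂ : entOf p (fun ω => ((u ω, w ω), v ω)) = entOf p (fun ω => ((u ω, v ω), w ω)) :=
    entOf_congr_of_iff fun _ _ => by simp only [Prod.mk.injEq]; tauto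
  simp only [condEntOf] at hmono ⊢
  linarith

theorem miOf_add_cmiOf_eq_of_hasKernel {X₁ X₂ X₃ U₁ U₂ U₃ : Type*} [Fintype X₁] [Fintype X₂]
    [Fintype X₃] [Fintype U₁] [Fintype U₂] [Fintype U₃] (hp0 : ∀ ω, 0 ≤ p ω)
    {x₁ : Ω → X₁} {x₂ : Ω → X₂} {x₃ : Ω → X₃} {u₁ : Ω → U₁} {u₂ : Ω → U₂} {u₃ : Ω → U₃}
    {k₁ : X₁ → U₁ → ℝ} {k₂ : X₂ → U₂ → ℝ} {k₃ : X₃ → U₃ → ℝ}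
    (h₁ : HasKernel p (fun ω => (x₁ ω, x₂ ω, x₃ ω)) u₁ fun a => k₁ a.1)
    (h₂ : HasKernel p (fun ω => ((x₁ ω, x₂ ω, x₃ ω), u₁ ω)) u₂ fun a => k₂ a.1.2.1)
    (h₃ : HasKernel p (fun ω => (((x₁ ω, x₂ ω, x₃ ω), u₁ ω), u₂ ω)) u₃ fun a => k₃ a.1.1.2.2) :
    miOf p (fun ω => (x₁ ω, x₂ ω, x₃ ω)) (fun ω => (u₁ ω, u₂ ω, u₃ ω))
        + cmiOf p (fun ω => (x₂ ω, x₃ ω)) (fun ω => (u₂ ω, u₃ ω)) u₁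
      = miOf p x₁ u₁ + 2 * (miOf p x₂ u₂ + miOf p x₃ u₃)
        - 2 * (miOf p u₂ u₁ + miOf p u₃ (fun ω => (u₁ ω, u₂ ω))) := by
  have c₁ := entOf_pair_of_hasKernel hp0 h₁
  have c₂ := entOf_pair_of_hasKernel hp0 h₂
  have c₃ := entOf_pair_of_hasKernel hp0 h₃
  have d₁ := entOf_pair_of_hasKernel hp0 (h₁.comp (fun a : X₁ × X₂ × X₃ => a.1))
  have d₂ := entOf_pair_of_hasKernel hp0 (h₂.comp (fun a : (X₁ × X₂ × X₃) × U₁ => a.1.2.1))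
  have d₃ := entOf_pair_of_hasKernel hp0
    (h₃.comp (fun a : ((X₁ × X₂ × X₃) × U₁) × U₂ => a.1.1.2.2))
  have e₂ := entOf_pair_of_hasKernel hp0
    (h₂.comp (fun a : (X₁ × X₂ × X₃) × U₁ => (a.2, a.1.2)) (q := fun b => k₂ b.2.1))
  have e₃ := entOf_pair_of_hasKernel hp0
    (h₃.comp (fun a : ((X₁ × X₂ × X₃) × U₁) × U₂ => ((a.1.2, a.1.1.2), a.2))
      (q := fun b => k₃ b.1.2.2))
  have r₁ : entOf p (fun ω => ((x₁ ω, x₂ ω, x₃ ω), u₁ ω, u₂ ω, u₃ ω))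
      = entOf p (fun ω => ((((x₁ ω, x₂ ω, x₃ ω), u₁ ω), u₂ ω), u₃ ω)) :=
    entOf_congr_of_iff fun _ _ => by simp only [Prod.mk.injEq]; tauto
  have r₂ : entOf p (fun ω => (u₁ ω, (x₂ ω, x₃ ω), u₂ ω, u₃ ω))
      = entOf p (fun ω => (((u₁ ω, x₂ ω, x₃ ω), u₂ ω), u₃ ω)) :=
    entOf_congr_of_iff fun _ _ => by simp only [Prod.mk.injEq]; tauto
  have r₃ : entOf p (fun ω => (u₂ ω, u₁ ω)) = entOf p (fun ω => (u₁ ω, u₂ ω)) :=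
    entOf_congr_of_iff fun _ _ => by simp only [Prod.mk.injEq]; tauto
  have r₄ : entOf p (fun ω => (u₃ ω, u₁ ω, u₂ ω)) = entOf p (fun ω => (u₁ ω, u₂ ω, u₃ ω)) :=
    entOf_congr_of_iff fun _ _ => by simp only [Prod.mk.injEq]; tauto
  simp only [miOf, cmiOf]
  dsimp only at *
  linarith

end Kernels

section Factorized

variable {X1 X2 X3 Y U1 U2 U3 U4 : Type*} [Fintype X1] [Fintype X2] [Fintype X3] [Fintype Y]
  [Fintype U1] [Fintype U2] [Fintype U3] [Fintype U4]
  {pJ : X1 × X2 × X3 × Y → ℝ} {k1 : X1 → U1 → ℝ} {k2 : X2 → U2 → ℝ} {k3 : X3 → U3 → ℝ}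
  {k4 : U2 × U3 → U4 → ℝ} {p : X1 × X2 × X3 × Y × U1 × U2 × U3 × U4 → ℝ}

theorem hasKernel_U1_given_X (hp : ∀ x1 x2 x3 y u1 u2 u3 u4,
      p (x1, x2, x3, y, u1, u2, u3, u4)
        = pJ (x1, x2, x3, y) * k1 x1 u1 * k2 x2 u2 * k3 x3 u3 * k4 (u2, u3) u4)
    (hk1 : ∀ x, ∑ u, k1 x u = 1) (hk2 : ∀ x, ∑ u, k2 x u = 1)
    (hk3 : ∀ x, ∑ u, k3 x u = 1) (hk4 : ∀ v, ∑ u, k4 v u = 1) :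
    HasKernel p (fun ω => (ω.1, ω.2.1, ω.2.2.1)) (fun ω => ω.2.2.2.2.1) fun a => k1 a.1 := by
  rintro ⟨x1, x2, x3⟩ u1
  simp only [margOf, Fintype.sum_prod_type, hp, Prod.mk.injEq, ite_and, Finset.sum_ite_irrel,
    Finset.sum_ite_eq', Finset.sum_const_zero, Finset.mem_univ, if_true, ← Finset.mul_sum,
    ← Finset.sum_mul, hk1, hk2, hk3, hk4, mul_one]

theorem hasKernel_U2_given_XU1 (hp : ∀ x1 x2 x3 y u1 u2 u3 u4,
      p (x1, x2, x3, y, u1, u2, u3, u4)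
        = pJ (x1, x2, x3, y) * k1 x1 u1 * k2 x2 u2 * k3 x3 u3 * k4 (u2, u3) u4)
    (hk2 : ∀ x, ∑ u, k2 x u = 1) (hk3 : ∀ x, ∑ u, k3 x u = 1)
    (hk4 : ∀ v, ∑ u, k4 v u = 1) :
    HasKernel p (fun ω => ((ω.1, ω.2.1, ω.2.2.1), ω.2.2.2.2.1)) (fun ω => ω.2.2.2.2.2.1)
      fun a => k2 a.1.2.1 := by
  rintro ⟨⟨x1, x2, x3⟩, u1⟩ u2
  simp only [margOf, Fintype.sum_prod_type, hp, Prod.mk.injEq, ite_and, Finset.sum_ite_irrel,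
    Finset.sum_ite_eq', Finset.sum_const_zero, Finset.mem_univ, if_true, ← Finset.mul_sum,
    ← Finset.sum_mul, hk2, hk3, hk4, mul_one]

theorem hasKernel_U3_given_XU12 (hp : ∀ x1 x2 x3 y u1 u2 u3 u4,
      p (x1, x2, x3, y, u1, u2, u3, u4)
        = pJ (x1, x2, x3, y) * k1 x1 u1 * k2 x2 u2 * k3 x3 u3 * k4 (u2, u3) u4)
    (hk3 : ∀ x, ∑ u, k3 x u = 1) (hk4 : ∀ v, ∑ u, k4 v u = 1) :
    HasKernel p (fun ω => (((ω.1, ω.2.1, ω.2.2.1), ω.2.2.2.2.1), ω.2.2.2.2.2.1))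
      (fun ω => ω.2.2.2.2.2.2.1) fun a => k3 a.1.1.2.2 := by
  rintro ⟨⟨⟨x1, x2, x3⟩, u1⟩, u2⟩ u3
  simp only [margOf, Fintype.sum_prod_type, hp, Prod.mk.injEq, ite_and, Finset.sum_ite_irrel,
    Finset.sum_ite_eq', Finset.sum_const_zero, Finset.mem_univ, if_true, ← Finset.mul_sum,
    ← Finset.sum_mul, hk3, hk4, mul_one]

theorem hasKernel_U4_given_UY (hp : ∀ x1 x2 x3 y u1 u2 u3 u4,
      p (x1, x2, x3, y, u1, u2, u3, u4)
        = pJ (x1, x2, x3, y) * k1 x1 u1 * k2 x2 u2 * k3 x3 u3 * k4 (u2, u3) u4)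
    (hk4 : ∀ v, ∑ u, k4 v u = 1) :
    HasKernel p (fun ω => ((ω.2.2.2.2.1, ω.2.2.2.2.2.1, ω.2.2.2.2.2.2.1), ω.2.2.2.1))
      (fun ω => ω.2.2.2.2.2.2.2) fun a => k4 a.1.2 := by
  rintro ⟨⟨u1, u2, u3⟩, y⟩ u4
  simp only [margOf, Fintype.sum_prod_type, hp, Prod.mk.injEq, ite_and, Finset.sum_ite_irrel,
    Finset.sum_ite_eq', Finset.sum_const_zero, Finset.mem_univ, if_true, ← Finset.mul_sum,
    ← Finset.sum_mul, hk4, mul_one]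

end Factorized

theorem stmt7_general {X1 X2 X3 Y U1 U2 U3 U4 : Type*}
    [Fintype X1] [Fintype X2] [Fintype X3] [Fintype Y]
    [Fintype U1] [Fintype U2] [Fintype U3] [Fintype U4]
    (pJ : X1 × X2 × X3 × Y → ℝ) (hpJ0 : ∀ v, 0 ≤ pJ v)
    (k1 : X1 → U1 → ℝ) (hk10 : ∀ x u, 0 ≤ k1 x u) (hk11 : ∀ x, ∑ u, k1 x u = 1)
    (k2 : X2 → U2 → ℝ) (hk20 : ∀ x u, 0 ≤ k2 x u) (hk21 : ∀ x, ∑ u, k2 x u = 1)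
    (k3 : X3 → U3 → ℝ) (hk30 : ∀ x u, 0 ≤ k3 x u) (hk31 : ∀ x, ∑ u, k3 x u = 1)
    (k4 : U2 × U3 → U4 → ℝ) (hk40 : ∀ v u, 0 ≤ k4 v u)
    (hk41 : ∀ v, ∑ u, k4 v u = 1)
    (p : X1 × X2 × X3 × Y × U1 × U2 × U3 × U4 → ℝ)
    (hp : ∀ x1 x2 x3 y u1 u2 u3 u4,
      p (x1, x2, x3, y, u1, u2, u3, u4)
        = pJ (x1, x2, x3, y) * k1 x1 u1 * k2 x2 u2 * k3 x3 u3 * k4 (u2, u3) u4)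
    (s : ℝ) :
    -(condEntOf p (fun ω => ω.2.2.2.1)
        (fun ω => (ω.2.2.2.2.1, ω.2.2.2.2.2.1, ω.2.2.2.2.2.2.1)))
      - s * (miOf p (fun ω => (ω.1, ω.2.1, ω.2.2.1))
              (fun ω => (ω.2.2.2.2.1, ω.2.2.2.2.2.1, ω.2.2.2.2.2.2.1))
            + cmiOf p (fun ω => (ω.2.1, ω.2.2.1))
                (fun ω => (ω.2.2.2.2.2.1, ω.2.2.2.2.2.2.1))
                (fun ω => ω.2.2.2.2.1))
    ≥ -(condEntOf p (fun ω => ω.2.2.2.1)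
          (fun ω => (ω.2.2.2.2.1, ω.2.2.2.2.2.2.2)))
      - s * miOf p (fun ω => ω.1) (fun ω => ω.2.2.2.2.1)
      - 2 * s * (miOf p (fun ω => ω.2.1) (fun ω => ω.2.2.2.2.2.1)
          + miOf p (fun ω => ω.2.2.1) (fun ω => ω.2.2.2.2.2.2.1))
      + 2 * s * (miOf p (fun ω => ω.2.2.2.2.2.1) (fun ω => ω.2.2.2.2.1)
          + miOf p (fun ω => ω.2.2.2.2.2.2.1)
              (fun ω => (ω.2.2.2.2.1, ω.2.2.2.2.2.1))) := by
  have hp0 : ∀ ω, 0 ≤ p ω := by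
    rintro ⟨x1, x2, x3, y, u1, u2, u3, u4⟩
    rw [hp]
    have := hpJ0 (x1, x2, x3, y)
    have := hk10 x1 u1; have := hk20 x2 u2; have := hk30 x3 u3; have := hk40 (u2, u3) u4
    positivity
  have hY := condEntOf_le_of_hasKernel hp0 (hasKernel_U4_given_UY hp hk41)
  rw [miOf_add_cmiOf_eq_of_hasKernel hp0 (hasKernel_U1_given_X hp hk11 hk21 hk31 hk41)
    (hasKernel_U2_given_XU1 hp hk21 hk31 hk41) (hasKernel_U3_given_XU12 hp hk31 hk41)]
  linarith

/-- Lemma 1 of the paper: under the factorization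
`P_{X1X2X3Y}·P_{U1|X1}·P_{U2|X2}·P_{U3|X3}·P_{U4|U2,U3}`, for every `s ≥ 0`,
`-H(Y|U1,U2,U3) - s[I(X123;U123)+I(X23;U23|U1)]
  ≥ -H(Y|U1,U4) - s I(X1;U1) - 2s[I(X2;U2)+I(X3;U3)] + 2s[I(U2;U1)+I(U3;U1,U2)]`. -/
theorem stmt7 {X1 X2 X3 Y U1 U2 U3 U4 : Type*}
    [Fintype X1] [Fintype X2] [Fintype X3] [Fintype Y]
    [Fintype U1] [Fintype U2] [Fintype U3] [Fintype U4]
    (pJ : X1 × X2 × X3 × Y → ℝ) (hpJ0 : ∀ v, 0 ≤ pJ v) (hpJ1 : ∑ v, pJ v = 1)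
    (k1 : X1 → U1 → ℝ) (hk10 : ∀ x u, 0 ≤ k1 x u) (hk11 : ∀ x, ∑ u, k1 x u = 1)
    (k2 : X2 → U2 → ℝ) (hk20 : ∀ x u, 0 ≤ k2 x u) (hk21 : ∀ x, ∑ u, k2 x u = 1)
    (k3 : X3 → U3 → ℝ) (hk30 : ∀ x u, 0 ≤ k3 x u) (hk31 : ∀ x, ∑ u, k3 x u = 1)
    (k4 : U2 × U3 → U4 → ℝ) (hk40 : ∀ v u, 0 ≤ k4 v u)
    (hk41 : ∀ v, ∑ u, k4 v u = 1)
    (p : X1 × X2 × X3 × Y × U1 × U2 × U3 × U4 → ℝ)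
    (hp : ∀ x1 x2 x3 y u1 u2 u3 u4,
      p (x1, x2, x3, y, u1, u2, u3, u4)
        = pJ (x1, x2, x3, y) * k1 x1 u1 * k2 x2 u2 * k3 x3 u3 * k4 (u2, u3) u4)
    (s : ℝ) (hs : 0 ≤ s) :
    -(condEntOf p (fun ω => ω.2.2.2.1)
        (fun ω => (ω.2.2.2.2.1, ω.2.2.2.2.2.1, ω.2.2.2.2.2.2.1)))
      - s * (miOf p (fun ω => (ω.1, ω.2.1, ω.2.2.1))
              (fun ω => (ω.2.2.2.2.1, ω.2.2.2.2.2.1, ω.2.2.2.2.2.2.1))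
            + cmiOf p (fun ω => (ω.2.1, ω.2.2.1))
                (fun ω => (ω.2.2.2.2.2.1, ω.2.2.2.2.2.2.1))
                (fun ω => ω.2.2.2.2.1))
    ≥ -(condEntOf p (fun ω => ω.2.2.2.1)
          (fun ω => (ω.2.2.2.2.1, ω.2.2.2.2.2.2.2)))
      - s * miOf p (fun ω => ω.1) (fun ω => ω.2.2.2.2.1)
      - 2 * s * (miOf p (fun ω => ω.2.1) (fun ω => ω.2.2.2.2.2.1)
          + miOf p (fun ω => ω.2.2.1) (fun ω => ω.2.2.2.2.2.2.1))
      + 2 * s * (miOf p (fun ω => ω.2.2.2.2.2.1) (fun ω => ω.2.2.2.2.1)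
          + miOf p (fun ω => ω.2.2.2.2.2.2.1)
              (fun ω => (ω.2.2.2.2.1, ω.2.2.2.2.2.1))) :=
  stmt7_general pJ hpJ0 k1 hk10 hk11 k2 hk20 hk21 k3 hk30 hk31 k4 hk40 hk41 p hp s
end
end

section
/- Let X2, X3, U1, U2, U3 be discrete random variables whose joint law satisfies the Markov chains U2 -- X2 -- (X3, U1, U3) and U3 -- X3 -- (X2, U1, U2). Then I(X2,X3; U2,U3 | U1) = I(X2;U2) - I(U2;U1) + I(X3;U3) - I(U3;U1,U2). -/
open Real
open scoped BigOperators Classical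

noncomputable section

/- ------------------ auxiliary lemmas ------------------ -/

lemma entOf_comp_inj {Ω α β : Type*} [Fintype Ω] [Fintype α] [Fintype β]
    (p : Ω → ℝ) (f : Ω → α) (e : α → β) (he : Function.Injective e) :
    entOf p (fun ω => e (f ω)) = entOf p f := by
  unfold entOf ent
  congr 1
  have h1 : ∀ a, margOf p (fun ω => e (f ω)) (e a) = margOf p f a := by
    intro a; unfold margOf
    exact Finset.sum_congr rfl fun ω _ => by simp [he.eq_iff]
  have h2 : ∀ b, b ∉ Finset.univ.image e → margOf p (fun ω => e (f ω)) b = 0 := by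
    intro b hb; unfold margOf
    apply Finset.sum_eq_zero; intro ω _
    rw [if_neg]; intro h; exact hb (Finset.mem_image.2 ⟨f ω, Finset.mem_univ _, h⟩)
  rw [← Finset.sum_subset (Finset.subset_univ (Finset.univ.image e))
      (fun b _ hb => by rw [h2 b hb]; simp)]
  rw [Finset.sum_image (fun a _ b _ h => he h)]
  exact Finset.sum_congr rfl fun a _ => by rw [h1]

lemma entOf_id {Ω : Type*} [Fintype Ω] (p : Ω → ℝ) :
    entOf p (fun ω => ω) = ent p := by
  have : margOf p (fun ω => ω) = p := funext fun a => by
    simp [margOf, Finset.sum_ite_eq']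
  rw [entOf, this]

lemma collapse' {ι : Type*} [Fintype ι] {k : ι → ℝ} (hk : ∑ i, k i = 1)
    (F : ι → ℝ) (c : ℝ) (h : ∀ i, F i = c * k i) : ∑ i, F i = c := by
  rw [Finset.sum_congr rfl (fun i _ => h i), ← Finset.mul_sum, hk, mul_one]

lemma ent_prod_kernel {α β : Type*} [Fintype α] [Fintype β]
    (q : α → ℝ) (k : α → β → ℝ) (hk : ∀ x, ∑ u, k x u = 1) :
    ent (fun z : α × β => q z.1 * k z.1 z.2)
      = ent q - ∑ x, ∑ u, q x * k x u * Real.log (k x u) := by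
  have hsplit : ∀ x u, q x * k x u * Real.log (q x * k x u)
      = q x * k x u * Real.log (q x) + q x * k x u * Real.log (k x u) := by
    intro x u
    rcases eq_or_ne (q x) 0 with h | ha; · simp [h]
    rcases eq_or_ne (k x u) 0 with h | hb; · simp [h]
    rw [Real.log_mul ha hb]; ring
  unfold ent
  rw [Fintype.sum_prod_type]
  have e1 : ∀ x : α, (∑ u, q x * k x u * Real.log (q x * k x u))
      = q x * Real.log (q x) + ∑ u, q x * k x u * Real.log (k x u) := by
    intro x
    rw [Finset.sum_congr rfl (fun u _ => hsplit x u), Finset.sum_add_distrib]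
    congr 1
    exact collapse' (hk x) _ _ (fun u => by ring)
  rw [Finset.sum_congr rfl (fun x _ => e1 x), Finset.sum_add_distrib]
  ring

/-- Chain rule for the factorized joint: `H(p) = H(pB) + H(U2|X2) + H(U3|X3)`. -/
lemma ent_factor {X2 X3 U1 U2 U3 : Type*}
    [Fintype X2] [Fintype X3] [Fintype U1] [Fintype U2] [Fintype U3]
    (pB : X2 × X3 × U1 → ℝ)
    (k2 : X2 → U2 → ℝ) (hk21 : ∀ x, ∑ u, k2 x u = 1)
    (k3 : X3 → U3 → ℝ) (hk31 : ∀ x, ∑ u, k3 x u = 1)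
    (p : X2 × X3 × U1 × U2 × U3 → ℝ)
    (hp : ∀ x2 x3 u1 u2 u3,
      p (x2, x3, u1, u2, u3) = pB (x2, x3, u1) * k2 x2 u2 * k3 x3 u3) :
    ent p = ent pB
      - (∑ x, ∑ u, (∑ x3, ∑ u1, pB (x, x3, u1)) * k2 x u * Real.log (k2 x u))
      - (∑ y, ∑ u, (∑ x2, ∑ u1, pB (x2, y, u1)) * k3 y u * Real.log (k3 y u)) := by
  have hsplit3 : ∀ a b c : ℝ, a * b * c * Real.log (a * b * c)
      = a * b * c * Real.log a + a * b * c * Real.log b + a * b * c * Real.log c := by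
    intro a b c
    rcases eq_or_ne a 0 with h | ha; · simp [h]
    rcases eq_or_ne b 0 with h | hb; · simp [h]
    rcases eq_or_ne c 0 with h | hc; · simp [h]
    rw [Real.log_mul (mul_ne_zero ha hb) hc, Real.log_mul ha hb]; ring
  have P1 : (∑ x2, ∑ x3, ∑ u1, ∑ u2, ∑ u3,
        pB (x2, x3, u1) * k2 x2 u2 * k3 x3 u3 * Real.log (pB (x2, x3, u1)))
      = ∑ x2, ∑ x3, ∑ u1, pB (x2, x3, u1) * Real.log (pB (x2, x3, u1)) := by
    refine Finset.sum_congr rfl fun x2 _ => Finset.sum_congr rfl fun x3 _ =>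
      Finset.sum_congr rfl fun u1 _ => ?_
    calc (∑ u2, ∑ u3, pB (x2, x3, u1) * k2 x2 u2 * k3 x3 u3 * Real.log (pB (x2, x3, u1)))
        = ∑ u2, pB (x2, x3, u1) * Real.log (pB (x2, x3, u1)) * k2 x2 u2 :=
          Finset.sum_congr rfl fun u2 _ => collapse' (hk31 x3) _ _ (fun u3 => by ring)
      _ = pB (x2, x3, u1) * Real.log (pB (x2, x3, u1)) :=
          collapse' (hk21 x2) _ _ (fun u2 => by ring)
  have P2 : (∑ x2, ∑ x3, ∑ u1, ∑ u2, ∑ u3,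
        pB (x2, x3, u1) * k2 x2 u2 * k3 x3 u3 * Real.log (k2 x2 u2))
      = ∑ x, ∑ u, (∑ x3, ∑ u1, pB (x, x3, u1)) * k2 x u * Real.log (k2 x u) := by
    refine Finset.sum_congr rfl fun x2 _ => ?_
    calc (∑ x3, ∑ u1, ∑ u2, ∑ u3,
          pB (x2, x3, u1) * k2 x2 u2 * k3 x3 u3 * Real.log (k2 x2 u2))
        = ∑ x3, ∑ u1, ∑ u2, pB (x2, x3, u1) * k2 x2 u2 * Real.log (k2 x2 u2) := by
          refine Finset.sum_congr rfl fun x3 _ => Finset.sum_congr rfl fun u1 _ =>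
            Finset.sum_congr rfl fun u2 _ => ?_
          exact collapse' (hk31 x3) _ _ (fun u3 => by ring)
      _ = ∑ x3, ∑ u2, ∑ u1, pB (x2, x3, u1) * k2 x2 u2 * Real.log (k2 x2 u2) :=
          Finset.sum_congr rfl fun x3 _ => Finset.sum_comm
      _ = ∑ u2, ∑ x3, ∑ u1, pB (x2, x3, u1) * k2 x2 u2 * Real.log (k2 x2 u2) :=
          Finset.sum_comm
      _ = ∑ u2, (∑ x3, ∑ u1, pB (x2, x3, u1)) * k2 x2 u2 * Real.log (k2 x2 u2) := by
          refine Finset.sum_congr rfl fun u2 _ => ?_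
          rw [Finset.sum_mul, Finset.sum_mul]
          refine Finset.sum_congr rfl fun x3 _ => ?_
          rw [Finset.sum_mul, Finset.sum_mul]
  have P3 : (∑ x2, ∑ x3, ∑ u1, ∑ u2, ∑ u3,
        pB (x2, x3, u1) * k2 x2 u2 * k3 x3 u3 * Real.log (k3 x3 u3))
      = ∑ y, ∑ u, (∑ x2, ∑ u1, pB (x2, y, u1)) * k3 y u * Real.log (k3 y u) := by
    calc (∑ x2, ∑ x3, ∑ u1, ∑ u2, ∑ u3,
          pB (x2, x3, u1) * k2 x2 u2 * k3 x3 u3 * Real.log (k3 x3 u3))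
        = ∑ x2, ∑ x3, ∑ u1, ∑ u3, pB (x2, x3, u1) * k3 x3 u3 * Real.log (k3 x3 u3) := by
          refine Finset.sum_congr rfl fun x2 _ => Finset.sum_congr rfl fun x3 _ =>
            Finset.sum_congr rfl fun u1 _ => ?_
          rw [Finset.sum_comm]
          exact Finset.sum_congr rfl fun u3 _ =>
            collapse' (hk21 x2) _ _ (fun u2 => by ring)
      _ = ∑ x3, ∑ x2, ∑ u1, ∑ u3, pB (x2, x3, u1) * k3 x3 u3 * Real.log (k3 x3 u3) :=
          Finset.sum_comm
      _ = ∑ x3, ∑ u3, ∑ x2, ∑ u1, pB (x2, x3, u1) * k3 x3 u3 * Real.log (k3 x3 u3) := by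
          refine Finset.sum_congr rfl fun x3 _ => ?_
          calc (∑ x2, ∑ u1, ∑ u3, pB (x2, x3, u1) * k3 x3 u3 * Real.log (k3 x3 u3))
              = ∑ x2, ∑ u3, ∑ u1, pB (x2, x3, u1) * k3 x3 u3 * Real.log (k3 x3 u3) :=
                Finset.sum_congr rfl fun x2 _ => Finset.sum_comm
            _ = ∑ u3, ∑ x2, ∑ u1, pB (x2, x3, u1) * k3 x3 u3 * Real.log (k3 x3 u3) :=
                Finset.sum_comm
      _ = ∑ y, ∑ u, (∑ x2, ∑ u1, pB (x2, y, u1)) * k3 y u * Real.log (k3 y u) := by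
          refine Finset.sum_congr rfl fun x3 _ => Finset.sum_congr rfl fun u3 _ => ?_
          rw [Finset.sum_mul, Finset.sum_mul]
          refine Finset.sum_congr rfl fun x2 _ => ?_
          rw [Finset.sum_mul, Finset.sum_mul]
  have e1 : (∑ v, p v * Real.log (p v))
      = (∑ x2, ∑ x3, ∑ u1, pB (x2, x3, u1) * Real.log (pB (x2, x3, u1)))
        + (∑ x, ∑ u, (∑ x3, ∑ u1, pB (x, x3, u1)) * k2 x u * Real.log (k2 x u))
        + (∑ y, ∑ u, (∑ x2, ∑ u1, pB (x2, y, u1)) * k3 y u * Real.log (k3 y u)) := by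
    rw [← P1, ← P2, ← P3]
    simp only [Fintype.sum_prod_type, hp]
    simp only [← Finset.sum_add_distrib]
    refine Finset.sum_congr rfl fun x2 _ => Finset.sum_congr rfl fun x3 _ =>
      Finset.sum_congr rfl fun u1 _ => Finset.sum_congr rfl fun u2 _ =>
      Finset.sum_congr rfl fun u3 _ => hsplit3 _ _ _
  unfold ent
  have hpB' : (∑ v : X2 × X3 × U1, pB v * Real.log (pB v))
      = ∑ x2, ∑ x3, ∑ u1, pB (x2, x3, u1) * Real.log (pB (x2, x3, u1)) := by
    simp only [Fintype.sum_prod_type]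
  rw [e1, hpB']; ring

/-- Under the Markov chains `U2 -- X2 -- (X3,U1,U3)` and `U3 -- X3 -- (X2,U1,U2)`,
`I(X2,X3;U2,U3|U1) = I(X2;U2) - I(U2;U1) + I(X3;U3) - I(U3;U1,U2)`. -/
theorem stmt15 {X2 X3 U1 U2 U3 : Type*}
    [Fintype X2] [Fintype X3] [Fintype U1] [Fintype U2] [Fintype U3]
    (pB : X2 × X3 × U1 → ℝ) (hpB0 : ∀ v, 0 ≤ pB v) (hpB1 : ∑ v, pB v = 1)
    (k2 : X2 → U2 → ℝ) (hk20 : ∀ x u, 0 ≤ k2 x u) (hk21 : ∀ x, ∑ u, k2 x u = 1)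
    (k3 : X3 → U3 → ℝ) (hk30 : ∀ x u, 0 ≤ k3 x u) (hk31 : ∀ x, ∑ u, k3 x u = 1)
    (p : X2 × X3 × U1 × U2 × U3 → ℝ)
    (hp : ∀ x2 x3 u1 u2 u3,
      p (x2, x3, u1, u2, u3) = pB (x2, x3, u1) * k2 x2 u2 * k3 x3 u3) :
    cmiOf p (fun ω => (ω.1, ω.2.1)) (fun ω => (ω.2.2.2.1, ω.2.2.2.2))
        (fun ω => ω.2.2.1)
      = miOf p (fun ω => ω.1) (fun ω => ω.2.2.2.1)
        - miOf p (fun ω => ω.2.2.2.1) (fun ω => ω.2.2.1)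
        + miOf p (fun ω => ω.2.1) (fun ω => ω.2.2.2.2)
        - miOf p (fun ω => ω.2.2.2.2) (fun ω => (ω.2.2.1, ω.2.2.2.1)) := by
  -- relabeling identities
  have hA : entOf p (fun ω : X2 × X3 × U1 × U2 × U3 => (ω.2.2.1, (ω.1, ω.2.1)))
      = entOf p (fun ω => (ω.1, ω.2.1, ω.2.2.1)) :=
    entOf_comp_inj p (fun ω => (ω.1, ω.2.1, ω.2.2.1))
      (fun a : X2 × X3 × U1 => (a.2.2, (a.1, a.2.1)))
      (fun a b h => by
        obtain ⟨a1, a2, a3⟩ := a; obtain ⟨b1, b2, b3⟩ := b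
        simp only [Prod.mk.injEq] at h ⊢; tauto)
  have hC : entOf p (fun ω : X2 × X3 × U1 × U2 × U3 =>
        (ω.2.2.1, (ω.1, ω.2.1), (ω.2.2.2.1, ω.2.2.2.2))) = ent p := by
    refine Eq.trans ?_ (entOf_id p)
    exact entOf_comp_inj p (fun ω => ω)
      (fun a : X2 × X3 × U1 × U2 × U3 => (a.2.2.1, (a.1, a.2.1), (a.2.2.2.1, a.2.2.2.2)))
      (fun a b h => by
        obtain ⟨a1, a2, a3, a4, a5⟩ := a; obtain ⟨b1, b2, b3, b4, b5⟩ := b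
        simp only [Prod.mk.injEq] at h ⊢; tauto)
  have hSwap : entOf p (fun ω : X2 × X3 × U1 × U2 × U3 => (ω.2.2.2.1, ω.2.2.1))
      = entOf p (fun ω => (ω.2.2.1, ω.2.2.2.1)) :=
    entOf_comp_inj p (fun ω => (ω.2.2.1, ω.2.2.2.1))
      (fun a : U1 × U2 => (a.2, a.1))
      (fun a b h => by
        obtain ⟨a1, a2⟩ := a; obtain ⟨b1, b2⟩ := b
        simp only [Prod.mk.injEq] at h ⊢; tauto)
  have hB2 : entOf p (fun ω : X2 × X3 × U1 × U2 × U3 =>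
        (ω.2.2.2.2, (ω.2.2.1, ω.2.2.2.1)))
      = entOf p (fun ω => (ω.2.2.1, (ω.2.2.2.1, ω.2.2.2.2))) :=
    entOf_comp_inj p (fun ω => (ω.2.2.1, (ω.2.2.2.1, ω.2.2.2.2)))
      (fun a : U1 × U2 × U3 => (a.2.2, (a.1, a.2.1)))
      (fun a b h => by
        obtain ⟨a1, a2, a3⟩ := a; obtain ⟨b1, b2, b3⟩ := b
        simp only [Prod.mk.injEq] at h ⊢; tauto)
  -- marginals
  have hmB : margOf p (fun ω => (ω.1, ω.2.1, ω.2.2.1)) = pB := by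
    funext z
    obtain ⟨a, b, c⟩ := z
    simp only [margOf, Fintype.sum_prod_type, hp, Prod.mk.injEq, ite_and,
      Finset.sum_ite_irrel, Finset.sum_const_zero, Finset.sum_ite_eq',
      Finset.mem_univ, if_true]
    calc (∑ u2, ∑ u3, pB (a, b, c) * k2 a u2 * k3 b u3)
        = ∑ u2, pB (a, b, c) * k2 a u2 := by
          refine Finset.sum_congr rfl fun u2 _ => ?_
          rw [← Finset.mul_sum, hk31, mul_one]
      _ = pB (a, b, c) := by rw [← Finset.mul_sum, hk21, mul_one]
  have hm2 : margOf p (fun ω => ω.1) = fun x => ∑ x3, ∑ u1, pB (x, x3, u1) := by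
    funext a
    simp only [margOf, Fintype.sum_prod_type, hp, Finset.sum_ite_irrel,
      Finset.sum_const_zero, Finset.sum_ite_eq', Finset.mem_univ, if_true]
    refine Finset.sum_congr rfl fun x3 _ => Finset.sum_congr rfl fun u1 _ => ?_
    calc (∑ u2, ∑ u3, pB (a, x3, u1) * k2 a u2 * k3 x3 u3)
        = ∑ u2, pB (a, x3, u1) * k2 a u2 := by
          refine Finset.sum_congr rfl fun u2 _ => ?_
          rw [← Finset.mul_sum, hk31, mul_one]
      _ = pB (a, x3, u1) := by rw [← Finset.mul_sum, hk21, mul_one]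
  have hm2u2 : margOf p (fun ω => (ω.1, ω.2.2.2.1))
      = fun z => (∑ x3, ∑ u1, pB (z.1, x3, u1)) * k2 z.1 z.2 := by
    funext z
    obtain ⟨a, b⟩ := z
    simp only [margOf, Fintype.sum_prod_type, hp, Prod.mk.injEq, ite_and,
      Finset.sum_ite_irrel, Finset.sum_const_zero, Finset.sum_ite_eq',
      Finset.mem_univ, if_true]
    rw [Finset.sum_mul]
    refine Finset.sum_congr rfl fun x3 _ => ?_
    rw [Finset.sum_mul]
    refine Finset.sum_congr rfl fun u1 _ => ?_
    rw [← Finset.mul_sum, hk31, mul_one]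
  have hm3 : margOf p (fun ω => ω.2.1) = fun y => ∑ x2, ∑ u1, pB (x2, y, u1) := by
    funext b
    simp only [margOf, Fintype.sum_prod_type, hp, Finset.sum_ite_irrel,
      Finset.sum_const_zero, Finset.sum_ite_eq', Finset.mem_univ, if_true]
    refine Finset.sum_congr rfl fun x2 _ => Finset.sum_congr rfl fun u1 _ => ?_
    calc (∑ u2, ∑ u3, pB (x2, b, u1) * k2 x2 u2 * k3 b u3)
        = ∑ u2, pB (x2, b, u1) * k2 x2 u2 := by
          refine Finset.sum_congr rfl fun u2 _ => ?_
          rw [← Finset.mul_sum, hk31, mul_one]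
      _ = pB (x2, b, u1) := by rw [← Finset.mul_sum, hk21, mul_one]
  have hm3u3 : margOf p (fun ω => (ω.2.1, ω.2.2.2.2))
      = fun z => (∑ x2, ∑ u1, pB (x2, z.1, u1)) * k3 z.1 z.2 := by
    funext z
    obtain ⟨b, c⟩ := z
    simp only [margOf, Fintype.sum_prod_type, hp, Prod.mk.injEq, ite_and,
      Finset.sum_ite_irrel, Finset.sum_const_zero, Finset.sum_ite_eq',
      Finset.mem_univ, if_true]
    rw [Finset.sum_mul]
    refine Finset.sum_congr rfl fun x2 _ => ?_
    rw [Finset.sum_mul]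
    refine Finset.sum_congr rfl fun u1 _ => ?_
    rw [← Finset.sum_mul, ← Finset.mul_sum, hk21, mul_one]
  -- entropy identities
  have key2 := ent_prod_kernel (fun x => ∑ x3, ∑ u1, pB (x, x3, u1)) k2 hk21
  have key3 := ent_prod_kernel (fun y => ∑ x2, ∑ u1, pB (x2, y, u1)) k3 hk31
  have keyC := ent_factor pB k2 hk21 k3 hk31 p hp
  simp only [cmiOf, miOf]
  rw [hA, hC, hSwap, hB2]
  simp only [entOf]
  rw [hmB, hm2, hm2u2, hm3, hm3u3]
  linarith [key2, key3, keyC]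
end
end
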